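/- If (π,H) is a time-variant conjugacy from Σ₁ to Σ₂ (i.e., each π_t and H are homeomorphisms) and (K,Q) is admissible for Σ₁ with π_t(Q) ⊆ π₀(Q) for all t > 0 and π_t^{-1}(π₀(Q)) ⊆ Q for all t > 0, then P_inv(f∘H, K, Q; Σ₁) = P_inv(f, π₀(K), π₀(Q); Σ₂) for all f ∈ C(U₂,ℝ). -/

import Mathlib

open scoped ENNReal
open Filter Set

noncomputable section

variable {M V : Type*}

/-- `S` is a `(τ,K,Q)`-spanning set of control functions. -/
def IsSpanningSet (φ : ℝ → M → (ℝ → V) → M) (𝒰 : Set (ℝ → V)) (τ : ℝ)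
    (K Q : Set M) (S : Set (ℝ → V)) : Prop :=
  S ⊆ 𝒰 ∧ ∀ x ∈ K, ∃ ω ∈ S, ∀ t ∈ Set.Icc (0:ℝ) τ, φ t x ω ∈ Q

/-- `(S_τ f)(ω) = ∫₀^τ f(ω(t)) dt`. -/
def birkhoff (f : V → ℝ) (τ : ℝ) (ω : ℝ → V) : ℝ := ∫ t in (0:ℝ)..τ, f (ω t)

/-- `Σ_{ω ∈ S} e^{(S_τ f)(ω)}`, valued in `ℝ≥0∞`. -/
def spanSum (f : V → ℝ) (τ : ℝ) (S : Set (ℝ → V)) : ℝ≥0∞ :=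
  ∑' ω : S, ENNReal.ofReal (Real.exp (birkhoff f τ ω.1))

/-- `a_τ(f,K,Q)`: infimum of the exponential sums over `(τ,K,Q)`-spanning sets. -/
def aInv (φ : ℝ → M → (ℝ → V) → M) (𝒰 : Set (ℝ → V)) (f : V → ℝ) (τ : ℝ)
    (K Q : Set M) : ℝ≥0∞ :=
  ⨅ (S : Set (ℝ → V)) (_ : IsSpanningSet φ 𝒰 τ K Q S), spanSum f τ S

/-- `r_inv(τ,K,Q)`: minimal cardinality of a `(τ,K,Q)`-spanning set. -/
def rInv (φ : ℝ → M → (ℝ → V) → M) (𝒰 : Set (ℝ → V)) (τ : ℝ) (K Q : Set M) : ℝ≥0∞ :=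
  ⨅ (S : Set (ℝ → V)) (_ : IsSpanningSet φ 𝒰 τ K Q S), (S.encard : ℝ≥0∞)

/-- Invariance pressure `P_inv(f,K,Q) = limsup_{τ→∞} (1/τ) log a_τ(f,K,Q)`. -/
def Pinv (φ : ℝ → M → (ℝ → V) → M) (𝒰 : Set (ℝ → V)) (f : V → ℝ) (K Q : Set M) : EReal :=
  Filter.limsup (fun τ : ℝ => ((τ : EReal))⁻¹ * ENNReal.log (aInv φ 𝒰 f τ K Q)) Filter.atTop

/-- Invariance entropy `h_inv(K,Q) = limsup_{τ→∞} (1/τ) log r_inv(τ,K,Q)`. -/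
def hInv (φ : ℝ → M → (ℝ → V) → M) (𝒰 : Set (ℝ → V)) (K Q : Set M) : EReal :=
  Filter.limsup (fun τ : ℝ => ((τ : EReal))⁻¹ * ENNReal.log (rInv φ 𝒰 τ K Q)) Filter.atTop

/-- `(K,Q)` is an admissible pair. -/
def Admissible [TopologicalSpace M] (φ : ℝ → M → (ℝ → V) → M) (𝒰 : Set (ℝ → V))
    (K Q : Set M) : Prop :=
  IsCompact K ∧ K ⊆ Q ∧ ∀ x ∈ K, ∃ ω ∈ 𝒰, ∀ t : ℝ, 0 ≤ t → φ t x ω ∈ Q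

/-- Concatenation `ω₁ ∙_τ ω₂` of two control functions at time `τ`. -/
def concatCtrl (τ : ℝ) (ω₁ ω₂ : ℝ → V) : ℝ → V := fun t => if t ≤ τ then ω₁ t else ω₂ (t - τ)

/-- Cocycle property of the solution map. -/
def Cocycle (φ : ℝ → M → (ℝ → V) → M) : Prop :=
  ∀ (t s : ℝ), 0 ≤ t → 0 ≤ s → ∀ (x : M) (ω : ℝ → V),
    φ (t + s) x ω = φ t (φ s x ω) (fun r => ω (r + s))

/-- `𝒰` is closed under concatenation of controls. -/
def ConcatClosed (𝒰 : Set (ℝ → V)) : Prop :=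
  ∀ ω₁ ∈ 𝒰, ∀ ω₂ ∈ 𝒰, ∀ τ : ℝ, 0 < τ → concatCtrl τ ω₁ ω₂ ∈ 𝒰

/-- `Q` is controlled invariant. -/
def ControlledInvariant (φ : ℝ → M → (ℝ → V) → M) (𝒰 : Set (ℝ → V)) (Q : Set M) : Prop :=
  ∀ x ∈ Q, ∃ ω ∈ 𝒰, ∀ t : ℝ, 0 ≤ t → φ t x ω ∈ Q

/-- The positive orbit `O⁺(x)`. -/
def posOrbit (φ : ℝ → M → (ℝ → V) → M) (𝒰 : Set (ℝ → V)) (x : M) : Set M :=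
  {y | ∃ t : ℝ, 0 < t ∧ ∃ ω ∈ 𝒰, φ t x ω = y}

/-- `Q` satisfies the no-return property. -/
def NoReturn (φ : ℝ → M → (ℝ → V) → M) (𝒰 : Set (ℝ → V)) (Q : Set M) : Prop :=
  ∀ x ∈ Q, ∀ τ : ℝ, 0 < τ → ∀ ω ∈ 𝒰, φ τ x ω ∈ Q → ∀ t ∈ Set.Icc (0:ℝ) τ, φ t x ω ∈ Q

/-- `D` is a control set: controlled invariant, approximately controllable, and maximal. -/
def IsControlSet [TopologicalSpace M] (φ : ℝ → M → (ℝ → V) → M) (𝒰 : Set (ℝ → V))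
    (D : Set M) : Prop :=
  D.Nonempty ∧ ControlledInvariant φ 𝒰 D ∧ (∀ x ∈ D, D ⊆ closure (posOrbit φ 𝒰 x)) ∧
    ∀ D' : Set M, D ⊆ D' → ControlledInvariant φ 𝒰 D' →
      (∀ x ∈ D', D' ⊆ closure (posOrbit φ 𝒰 x)) → D' = D

end

/-!
A time-variant semi-conjugacy `(π, H)` sends a `(τ, K, Q)`-spanning set `S` of controls to the
`(τ, π₀ K, Q₂)`-spanning set `{H ∘ ω | ω ∈ S}` as soon as every `π_t` maps `Q` into `Q₂`, and
this does not increase the exponential sum, because the Birkhoff sum of `f` along `H ∘ ω` is that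
of `f ∘ H` along `ω`. Hence `a_τ`, and with it `P_inv`, can only drop along a semi-conjugacy.
A conjugacy is inverted by the semi-conjugacy `(π_t⁻¹, H⁻¹)`; the two hypotheses on `Q` say
exactly that `π_t` maps `Q` into `π₀ Q` and `π_t⁻¹` maps `π₀ Q` back into `Q`, so the
inequality holds in both directions.
-/

section

variable {M₁ M₂ V₁ V₂ : Type*}

def IsSemiconjugacy (φ₁ : ℝ → M₁ → (ℝ → V₁) → M₁) (φ₂ : ℝ → M₂ → (ℝ → V₂) → M₂)
    (𝒰₁ : Set (ℝ → V₁)) (𝒰₂ : Set (ℝ → V₂)) (π : ℝ → M₁ → M₂) (H : V₁ → V₂) : Prop :=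
  (∀ ω ∈ 𝒰₁, H ∘ ω ∈ 𝒰₂) ∧
    ∀ t : ℝ, 0 ≤ t → ∀ x, ∀ ω ∈ 𝒰₁, π t (φ₁ t x ω) = φ₂ t (π 0 x) (H ∘ ω)

lemma spanSum_image_comp_le (f : V₂ → ℝ) (H : V₁ → V₂) (τ : ℝ) (S : Set (ℝ → V₁)) :
    spanSum f τ ((H ∘ ·) '' S) ≤ spanSum (f ∘ H) τ S :=
  ENNReal.tsum_le_tsum_comp_of_surjective imageFactorization_surjective
    fun ω : (H ∘ ·) '' S => ENNReal.ofReal (Real.exp (birkhoff f τ ω.1))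

lemma Pinv_le_Pinv_of_aInv_le {φ₁ : ℝ → M₁ → (ℝ → V₁) → M₁} {φ₂ : ℝ → M₂ → (ℝ → V₂) → M₂}
    {𝒰₁ : Set (ℝ → V₁)} {𝒰₂ : Set (ℝ → V₂)} {f₁ : V₁ → ℝ} {f₂ : V₂ → ℝ}
    {K₁ Q₁ : Set M₁} {K₂ Q₂ : Set M₂}
    (h : ∀ τ, aInv φ₂ 𝒰₂ f₂ τ K₂ Q₂ ≤ aInv φ₁ 𝒰₁ f₁ τ K₁ Q₁) :
    Pinv φ₂ 𝒰₂ f₂ K₂ Q₂ ≤ Pinv φ₁ 𝒰₁ f₁ K₁ Q₁ := by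
  refine limsup_le_limsup (eventually_ge_atTop 0 |>.mono fun τ hτ => ?_)
  exact mul_le_mul_of_nonneg_left (ENNReal.log_le_log (h τ))
    (EReal.inv_nonneg_of_nonneg (EReal.coe_nonneg.2 hτ))

namespace IsSemiconjugacy

variable {φ₁ : ℝ → M₁ → (ℝ → V₁) → M₁} {φ₂ : ℝ → M₂ → (ℝ → V₂) → M₂}
  {𝒰₁ : Set (ℝ → V₁)} {𝒰₂ : Set (ℝ → V₂)} {π : ℝ → M₁ → M₂} {H : V₁ → V₂}

lemma isSpanningSet_image (hπH : IsSemiconjugacy φ₁ φ₂ 𝒰₁ 𝒰₂ π H) {τ : ℝ} {K Q : Set M₁}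
    {Q₂ : Set M₂} (hQ : ∀ t, 0 ≤ t → MapsTo (π t) Q Q₂) {S : Set (ℝ → V₁)}
    (hS : IsSpanningSet φ₁ 𝒰₁ τ K Q S) :
    IsSpanningSet φ₂ 𝒰₂ τ (π 0 '' K) Q₂ ((H ∘ ·) '' S) := by
  refine ⟨image_subset_iff.2 fun ω hω => hπH.1 ω (hS.1 hω), ?_⟩
  rintro _ ⟨x, hx, rfl⟩
  obtain ⟨ω, hωS, hω⟩ := hS.2 x hx
  refine ⟨H ∘ ω, mem_image_of_mem _ hωS, fun t ht => ?_⟩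
  rw [← hπH.2 t ht.1 x ω (hS.1 hωS)]
  exact hQ t ht.1 (hω t ht)

lemma aInv_le (hπH : IsSemiconjugacy φ₁ φ₂ 𝒰₁ 𝒰₂ π H) {K Q : Set M₁} {Q₂ : Set M₂}
    (hQ : ∀ t, 0 ≤ t → MapsTo (π t) Q Q₂) (f : V₂ → ℝ) (τ : ℝ) :
    aInv φ₂ 𝒰₂ f τ (π 0 '' K) Q₂ ≤ aInv φ₁ 𝒰₁ (f ∘ H) τ K Q :=
  le_iInf₂ fun S hS => iInf₂_le_of_le _ (hπH.isSpanningSet_image hQ hS)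
    (spanSum_image_comp_le f H τ S)

lemma Pinv_le (hπH : IsSemiconjugacy φ₁ φ₂ 𝒰₁ 𝒰₂ π H) {K Q : Set M₁} {Q₂ : Set M₂}
    (hQ : ∀ t, 0 ≤ t → MapsTo (π t) Q Q₂) (f : V₂ → ℝ) :
    Pinv φ₂ 𝒰₂ f (π 0 '' K) Q₂ ≤ Pinv φ₁ 𝒰₁ (f ∘ H) K Q :=
  Pinv_le_Pinv_of_aInv_le (hπH.aInv_le hQ f)

lemma symm (hπH : IsSemiconjugacy φ₁ φ₂ 𝒰₁ 𝒰₂ π H) (e : ℝ → M₁ ≃ M₂) (he : ∀ t, ⇑(e t) = π t)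
    (eH : V₁ ≃ V₂) (heH : ⇑eH = H) (h𝒰 : ∀ ν ∈ 𝒰₂, eH.symm ∘ ν ∈ 𝒰₁) :
    IsSemiconjugacy φ₂ φ₁ 𝒰₂ 𝒰₁ (fun t => (e t).symm) eH.symm := by
  refine ⟨h𝒰, fun t ht y ν hν => ?_⟩
  have hconj := hπH.2 t ht ((e 0).symm y) (eH.symm ∘ ν) (h𝒰 ν hν)
  rw [← he, ← he, ← heH, Equiv.apply_symm_apply, ← Function.comp_assoc,
    Equiv.self_comp_symm, Function.id_comp] at hconj
  rw [← hconj]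
  exact (e t).symm_apply_apply _

end IsSemiconjugacy

end

theorem stmt12_general {M₁ M₂ V₁ V₂ : Type*} [TopologicalSpace M₁] [TopologicalSpace M₂]
    [TopologicalSpace V₁] [TopologicalSpace V₂]
    (φ₁ : ℝ → M₁ → (ℝ → V₁) → M₁) (φ₂ : ℝ → M₂ → (ℝ → V₂) → M₂)
    (𝒰₁ : Set (ℝ → V₁)) (𝒰₂ : Set (ℝ → V₂))
    (π : ℝ → M₁ → M₂) (H : V₁ → V₂)
    (hπhomeo : ∀ t : ℝ, ∃ e : M₁ ≃ₜ M₂, ⇑e = π t)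
    (hHhomeo : ∃ eH : V₁ ≃ₜ V₂, ⇑eH = H)
    (hH𝒰 : ∀ ω ∈ 𝒰₁, (fun t => H (ω t)) ∈ 𝒰₂)
    (hH𝒰' : ∀ ν ∈ 𝒰₂, ∀ ω : ℝ → V₁, (∀ t, H (ω t) = ν t) → ω ∈ 𝒰₁)
    (hconj : ∀ t : ℝ, 0 ≤ t → ∀ (x : M₁), ∀ ω ∈ 𝒰₁,
      π t (φ₁ t x ω) = φ₂ t (π 0 x) (fun s => H (ω s)))
    (K Q : Set M₁)
    (hπQ : ∀ t : ℝ, 0 < t → π t '' Q ⊆ π 0 '' Q)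
    (hπQ' : ∀ t : ℝ, 0 < t → (π t) ⁻¹' (π 0 '' Q) ⊆ Q)
    (f : V₂ → ℝ) :
    Pinv φ₁ 𝒰₁ (fun u => f (H u)) K Q = Pinv φ₂ 𝒰₂ f (π 0 '' K) (π 0 '' Q) := by
  choose e he using hπhomeo
  obtain ⟨eH, rfl⟩ := hHhomeo
  have hπH : IsSemiconjugacy φ₁ φ₂ 𝒰₁ 𝒰₂ π eH := ⟨hH𝒰, hconj⟩
  have hψ := hπH.symm (fun t => (e t).toEquiv) he eH.toEquiv rfl
    fun ν hν => hH𝒰' ν hν _ fun t => eH.apply_symm_apply (ν t)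
  have hπ0 : ∀ t, 0 ≤ t → π t ⁻¹' (π 0 '' Q) ⊆ Q := fun t ht => by
    rcases ht.eq_or_lt with rfl | ht
    · rw [← he 0, (e 0).preimage_image]
    · exact hπQ' t ht
  have hψQ : ∀ t, 0 ≤ t → MapsTo (e t).symm (π 0 '' Q) Q := fun t ht y hy =>
    hπ0 t ht (by rwa [mem_preimage, ← he t, (e t).apply_symm_apply])
  have hπQ₀ : ∀ t, 0 ≤ t → MapsTo (π t) Q (π 0 '' Q) := fun t ht => by
    rcases ht.eq_or_lt with rfl | ht
    · exact mapsTo_image _ _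
    · exact mapsTo_iff_image_subset.2 (hπQ t ht)
  refine le_antisymm ?_ (hπH.Pinv_le hπQ₀ f)
  have hK : (e 0).symm '' (π 0 '' K) = K := by
    rw [← he 0]; exact (e 0).toEquiv.symm_image_image K
  have hf : (f ∘ eH) ∘ eH.symm = f := funext fun v => congrArg f (eH.apply_symm_apply v)
  calc Pinv φ₁ 𝒰₁ (f ∘ eH) K Q
      = Pinv φ₁ 𝒰₁ (f ∘ eH) ((e 0).symm '' (π 0 '' K)) Q := by rw [hK]
    _ ≤ Pinv φ₂ 𝒰₂ ((f ∘ eH) ∘ eH.symm) (π 0 '' K) (π 0 '' Q) := hψ.Pinv_le hψQ _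
    _ = Pinv φ₂ 𝒰₂ f (π 0 '' K) (π 0 '' Q) := by rw [hf]

/-- for a time-variant conjugacy `(π,H)` (each `π_t` and `H` homeomorphisms)
with `π_t(Q) ⊆ π₀(Q)` and `π_t⁻¹(π₀(Q)) ⊆ Q` for all `t > 0`, the invariance pressures agree:
`P_inv(f∘H,K,Q;Σ₁) = P_inv(f,π₀(K),π₀(Q);Σ₂)`. -/
theorem stmt12 {M₁ M₂ V₁ V₂ : Type*} [TopologicalSpace M₁] [TopologicalSpace M₂]
    [TopologicalSpace V₁] [TopologicalSpace V₂]
    (φ₁ : ℝ → M₁ → (ℝ → V₁) → M₁) (φ₂ : ℝ → M₂ → (ℝ → V₂) → M₂)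
    (𝒰₁ : Set (ℝ → V₁)) (𝒰₂ : Set (ℝ → V₂))
    (π : ℝ → M₁ → M₂) (H : V₁ → V₂)
    (hπcont : Continuous fun p : ℝ × M₁ => π p.1 p.2)
    (hπhomeo : ∀ t : ℝ, ∃ e : M₁ ≃ₜ M₂, ⇑e = π t)
    (hHhomeo : ∃ eH : V₁ ≃ₜ V₂, ⇑eH = H)
    (hH𝒰 : ∀ ω ∈ 𝒰₁, (fun t => H (ω t)) ∈ 𝒰₂)
    (hH𝒰' : ∀ ν ∈ 𝒰₂, ∀ ω : ℝ → V₁, (∀ t, H (ω t) = ν t) → ω ∈ 𝒰₁)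
    (hconj : ∀ t : ℝ, 0 ≤ t → ∀ (x : M₁), ∀ ω ∈ 𝒰₁,
      π t (φ₁ t x ω) = φ₂ t (π 0 x) (fun s => H (ω s)))
    (K Q : Set M₁) (hadm : Admissible φ₁ 𝒰₁ K Q)
    (hπQ : ∀ t : ℝ, 0 < t → π t '' Q ⊆ π 0 '' Q)
    (hπQ' : ∀ t : ℝ, 0 < t → (π t) ⁻¹' (π 0 '' Q) ⊆ Q)
    (f : V₂ → ℝ) (hf : Continuous f) :
    Pinv φ₁ 𝒰₁ (fun u => f (H u)) K Q = Pinv φ₂ 𝒰₂ f (π 0 '' K) (π 0 '' Q) :=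
  stmt12_general φ₁ φ₂ 𝒰₁ 𝒰₂ π H hπhomeo hHhomeo hH𝒰 hH𝒰' hconj K Q hπQ hπQ' f
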